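/- For each N ∈ ℕ, the map (τ, z) ↦ (τ, e^{−Niτ} z / √(1 + (N/2)|z|²)) is a diffeomorphism from S¹ × ℝ² onto S¹ × B_{√(2/N)}(0) that preserves the contact structure ker(dτ + (1/2)(x dy − y dx)). -/

import Mathlib

set_option maxHeartbeats 1000000


/-- The standard contact form `dτ + (1/2)(x dy − y dx)` on `S¹ × ℝ²`,
written on the universal cover `ℝ × ℂ` (it is `τ`-independent, hence descends). -/
noncomputable def alphaCyl (p : ℝ × ℂ) (v : ℝ × ℂ) : ℝ :=
  v.1 + (1/2) * (p.2.re * v.2.im - p.2.im * v.2.re)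

/-- The shrinking map `(τ, z) ↦ (τ, e^{−Niτ} z / √(1 + (N/2)|z|²))`. -/
noncomputable def shrinkMap (N : ℕ) (q : ℝ × ℂ) : ℝ × ℂ :=
  (q.1, Complex.exp (-(N : ℂ) * (q.1 : ℂ) * Complex.I) * q.2
          / (Real.sqrt (1 + ((N : ℝ) / 2) * ‖q.2‖ ^ 2) : ℂ))


section
open Complex ContinuousLinearMap
lemma shrink_eq (N : ℕ) : shrinkMap N = fun p : ℝ × ℂ =>
    (p.1, Complex.exp (-(N : ℂ) * (p.1 : ℂ) * Complex.I) * p.2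
      * ((Real.sqrt (1 + ((N:ℝ)/2) * (p.2.re * p.2.re + p.2.im * p.2.im)) : ℂ))⁻¹) := by
  funext p
  simp only [shrinkMap, div_eq_mul_inv, Complex.sq_norm, Complex.normSq_apply]

lemma Fpos (N : ℕ) (z : ℂ) : 0 < 1 + ((N:ℝ)/2) * (z.re * z.re + z.im * z.im) := by
  have : 0 ≤ z.re * z.re + z.im * z.im := by nlinarith
  positivity

lemma contact_key (N : ℕ) (q v : ℝ × ℂ) :
    alphaCyl (shrinkMap N q) (fderiv ℝ (shrinkMap N) q v)
      = (1 + ((N:ℝ)/2) * ‖q.2‖ ^ 2)⁻¹ * alphaCyl q v := by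
  set c : ℝ := (N:ℝ)/2 with hc
  set F : ℝ × ℂ → ℝ := fun p => 1 + c * (p.2.re * p.2.re + p.2.im * p.2.im) with hF
  have hFq : 0 < F q := Fpos N q.2
  have hs0 : 0 < Real.sqrt (F q) := Real.sqrt_pos.mpr hFq
  have hne : ((Real.sqrt (F q) : ℝ) : ℂ) ≠ 0 := by
    exact_mod_cast ne_of_gt hs0
  -- derivatives
  have hre : HasFDerivAt (fun p : ℝ × ℂ => p.2.re)
      (Complex.reCLM.comp (ContinuousLinearMap.snd ℝ ℝ ℂ)) q :=
    (Complex.reCLM.comp (ContinuousLinearMap.snd ℝ ℝ ℂ)).hasFDerivAt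
  have him : HasFDerivAt (fun p : ℝ × ℂ => p.2.im)
      (Complex.imCLM.comp (ContinuousLinearMap.snd ℝ ℝ ℂ)) q :=
    (Complex.imCLM.comp (ContinuousLinearMap.snd ℝ ℝ ℂ)).hasFDerivAt
  have hFd : HasFDerivAt F _ q :=
    ((((hre.mul hre).add (him.mul him)).const_mul c).const_add 1)
  have hsq := hFd.sqrt (ne_of_gt hFq)
  have hofr := (Complex.ofRealCLM.hasFDerivAt (x := Real.sqrt (F q))).comp q hsq
  have hinv := (hasFDerivAt_inv' (𝕜 := ℝ) hne).comp q hofr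
  have hτ : HasFDerivAt (fun p : ℝ × ℂ => ((p.1 : ℝ) : ℂ))
      (Complex.ofRealCLM.comp (ContinuousLinearMap.fst ℝ ℝ ℂ)) q :=
    (Complex.ofRealCLM.comp (ContinuousLinearMap.fst ℝ ℝ ℂ)).hasFDerivAt
  have hlin := (hτ.const_mul (-(N:ℂ))).mul_const Complex.I
  have hexp := ((Complex.hasDerivAt_exp (-(N:ℂ) * (q.1:ℂ) * Complex.I)).hasFDerivAt.restrictScalars ℝ).comp q hlin
  have hz : HasFDerivAt (fun p : ℝ × ℂ => p.2) (ContinuousLinearMap.snd ℝ ℝ ℂ) q :=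
    (ContinuousLinearMap.snd ℝ ℝ ℂ).hasFDerivAt
  have hg := (hexp.mul hz).mul hinv
  have hfst : HasFDerivAt (fun p : ℝ × ℂ => p.1) (ContinuousLinearMap.fst ℝ ℝ ℂ) q :=
    (ContinuousLinearMap.fst ℝ ℝ ℂ).hasFDerivAt
  have hD := HasFDerivAt.prodMk hfst hg
  have hD' := hD.congr_of_eventuallyEq (f₁ := shrinkMap N)
    (Filter.Eventually.of_forall (fun p => by rw [shrink_eq]; rfl))
  rw [hD'.fderiv]
  simp only [alphaCyl, shrink_eq, ContinuousLinearMap.prod_apply,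
    ContinuousLinearMap.add_apply, ContinuousLinearMap.coe_smul', Pi.smul_apply,
    ContinuousLinearMap.coe_comp', Function.comp_apply, ContinuousLinearMap.coe_fst',
    ContinuousLinearMap.coe_snd', ContinuousLinearMap.neg_apply,
    ContinuousLinearMap.mulLeftRight_apply, ContinuousLinearMap.coe_restrictScalars',
    ContinuousLinearMap.smulRight_apply, ContinuousLinearMap.one_apply,
    Complex.ofRealCLM_apply, Complex.reCLM_apply, Complex.imCLM_apply,
    smul_eq_mul, Complex.real_smul, Pi.mul_apply, ContinuousLinearMap.toSpanSingleton_apply]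
  rw [Complex.sq_norm, Complex.normSq_apply]
  rw [← hc]
  have hFF : (1 + c * (q.2.re * q.2.re + q.2.im * q.2.im)) = F q := rfl
  rw [hFF]
  set s : ℝ := Real.sqrt (F q) with hsdef
  have hs2 : s ^ 2 = F q := Real.sq_sqrt hFq.le
  have hs2' : s ^ 2 = 1 + c * (q.2.re * q.2.re + q.2.im * q.2.im) := hs2
  rw [← hs2]
  set E : ℂ := Complex.exp (-(N:ℂ) * (q.1:ℂ) * Complex.I) with hE
  have habs : ‖E‖ = 1 := by
    rw [hE, Complex.norm_exp]; simp
  have hE1 : E.re * E.re + E.im * E.im = 1 := by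
    have h2 := Complex.sq_norm E
    rw [habs, Complex.normSq_apply] at h2
    linarith [h2]
  simp only [← Complex.ofReal_inv, Complex.mul_re, Complex.mul_im, Complex.add_re,
    Complex.add_im, Complex.neg_re, Complex.neg_im, Complex.I_re, Complex.I_im,
    Complex.ofReal_re, Complex.ofReal_im, Complex.natCast_re, Complex.natCast_im]
  have hsne : s ≠ 0 := ne_of_gt hs0
  have hNc : (N:ℝ) = 2 * c := by rw [hc]; ring
  rw [hNc]
  field_simp
  linear_combination
    ((-2:ℝ) * (N:ℝ) * v.1 * s^2 * (q.2.re^2 + q.2.im^2)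
      + 4 * (N:ℝ) * v.1 * s^5 * (q.2.re^2 + q.2.im^2)
      + 2 * s^2 * (q.2.re * v.2.im - q.2.im * v.2.re)
      - 4 * s^5 * (q.2.re * v.2.im - q.2.im * v.2.re)) * hE1
    + (4 * v.1 * s^2 - 8 * v.1 * s^5) * hs2'
    + ((4 * v.1 * s^2 - 8 * v.1 * s^5) * (q.2.re^2 + q.2.im^2)) * hc
    + ((-4:ℝ) * q.2.im * v.2.re * s^5 - 8 * q.2.im^2 * v.1 * s^5 * c
      + 4 * q.2.re * v.2.im * s^5 - 8 * q.2.re^2 * v.1 * s^5 * c) * hE1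
    + (8 * v.1 * s^5) * hs2'

/-- candidate inverse -/
noncomputable def unshrinkMap (N : ℕ) (p : ℝ × ℂ) : ℝ × ℂ :=
  (p.1, Complex.exp ((N : ℂ) * (p.1 : ℂ) * Complex.I) * p.2
          / (Real.sqrt (1 - ((N : ℝ) / 2) * ‖p.2‖ ^ 2) : ℂ))

lemma oneadd_pos (N : ℕ) (z : ℂ) : 0 < 1 + ((N:ℝ)/2) * ‖z‖ ^ 2 := by
  have : (0:ℝ) ≤ ‖z‖ ^ 2 := sq_nonneg _
  positivity

lemma abs_shrink (N : ℕ) (q : ℝ × ℂ) :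
    ‖(shrinkMap N q).2‖
      = ‖q.2‖ / Real.sqrt (1 + ((N:ℝ)/2) * ‖q.2‖ ^ 2) := by
  have h := oneadd_pos N q.2
  simp [shrinkMap, map_div₀, map_mul, Complex.norm_exp, Complex.norm_real,
    abs_of_pos (Real.sqrt_pos.mpr h)]

lemma mapsTo_shrink (N : ℕ) (hN : 0 < N) (q : ℝ × ℂ) :
    ‖(shrinkMap N q).2‖ < Real.sqrt (2 / (N:ℝ)) := by
  have hp := oneadd_pos N q.2
  have hs0 : 0 < Real.sqrt (1 + ((N:ℝ)/2) * ‖q.2‖ ^ 2) := Real.sqrt_pos.mpr hp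
  have hN0 : (0:ℝ) < (N:ℝ) := by exact_mod_cast hN
  rw [abs_shrink]
  rw [show Real.sqrt (2/(N:ℝ)) = Real.sqrt (2/(N:ℝ)) from rfl]
  have h1 : (‖q.2‖ / Real.sqrt (1 + ((N:ℝ)/2) * ‖q.2‖ ^ 2)) ^ 2
      < 2 / (N:ℝ) := by
    rw [div_pow, Real.sq_sqrt hp.le, div_lt_div_iff₀ (by positivity) hN0]
    nlinarith [sq_nonneg (‖q.2‖)]
  have h0 : 0 ≤ ‖q.2‖ / Real.sqrt (1 + ((N:ℝ)/2) * ‖q.2‖ ^ 2) := by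
    positivity
  nlinarith [Real.sq_sqrt (by positivity : (0:ℝ) ≤ 2/(N:ℝ)),
    Real.sqrt_nonneg (2/(N:ℝ))]

lemma left_inv (N : ℕ) (q : ℝ × ℂ) : unshrinkMap N (shrinkMap N q) = q := by
  obtain ⟨τ, z⟩ := q
  have hp := oneadd_pos N z
  set s : ℝ := Real.sqrt (1 + ((N:ℝ)/2) * ‖z‖ ^ 2) with hs
  have hs0 : 0 < s := Real.sqrt_pos.mpr hp
  have hs2 : s ^ 2 = 1 + ((N:ℝ)/2) * ‖z‖ ^ 2 := Real.sq_sqrt hp.le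
  have habs : ‖(shrinkMap N (τ, z)).2‖ = ‖z‖ / s := abs_shrink N (τ, z)
  have hkey : 1 - ((N:ℝ)/2) * (‖z‖ / s) ^ 2 = (s^2)⁻¹ := by
    field_simp
    nlinarith [hs2]
  have hsq : Real.sqrt (1 - ((N:ℝ)/2) * (‖z‖ / s) ^ 2) = s⁻¹ := by
    rw [hkey, Real.sqrt_inv, Real.sqrt_sq hs0.le]
  unfold unshrinkMap
  rw [habs, hsq]
  refine Prod.ext rfl ?_
  show Complex.exp ((N:ℂ) * (τ:ℂ) * Complex.I) * (shrinkMap N (τ, z)).2 / ((s⁻¹ : ℝ) : ℂ) = z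
  have hsne : ((s:ℝ) : ℂ) ≠ 0 := by exact_mod_cast ne_of_gt hs0
  rw [show (shrinkMap N (τ, z)).2
      = Complex.exp (-(N:ℂ) * (τ:ℂ) * Complex.I) * z / ((s:ℝ):ℂ) from rfl]
  rw [Complex.ofReal_inv]
  field_simp
  ring_nf
  rw [← Complex.exp_add]
  simp

lemma right_inv (N : ℕ) (hN : 0 < N) (p : ℝ × ℂ)
    (hp : ‖p.2‖ < Real.sqrt (2 / (N:ℝ))) :
    shrinkMap N (unshrinkMap N p) = p := by
  obtain ⟨τ, w⟩ := p
  have hN0 : (0:ℝ) < (N:ℝ) := by exact_mod_cast hN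
  have hw2 : ‖w‖ ^ 2 < 2 / (N:ℝ) := by
    have h0 : (0:ℝ) ≤ ‖w‖ := norm_nonneg w
    nlinarith [Real.sq_sqrt (by positivity : (0:ℝ) ≤ 2/(N:ℝ)), Real.sqrt_nonneg (2/(N:ℝ)),
      hp]
  have hq : 0 < 1 - ((N:ℝ)/2) * ‖w‖ ^ 2 := by
    have h2 : ‖w‖ ^ 2 * (N:ℝ) < (2/(N:ℝ)) * (N:ℝ) :=
      mul_lt_mul_of_pos_right hw2 hN0
    rw [div_mul_cancel₀ _ (ne_of_gt hN0)] at h2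
    nlinarith
  set t : ℝ := Real.sqrt (1 - ((N:ℝ)/2) * ‖w‖ ^ 2) with ht
  have ht0 : 0 < t := Real.sqrt_pos.mpr hq
  have ht2 : t ^ 2 = 1 - ((N:ℝ)/2) * ‖w‖ ^ 2 := Real.sq_sqrt hq.le
  have habs : ‖(unshrinkMap N (τ, w)).2‖ = ‖w‖ / t := by
    simp [unshrinkMap, map_div₀, map_mul, Complex.norm_exp, Complex.norm_real,
      abs_of_pos ht0]
    rw [← ht, abs_of_pos ht0]
  have hkey : 1 + ((N:ℝ)/2) * (‖w‖ / t) ^ 2 = (t^2)⁻¹ := by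
    field_simp
    nlinarith [ht2]
  have hsq : Real.sqrt (1 + ((N:ℝ)/2) * (‖w‖ / t) ^ 2) = t⁻¹ := by
    rw [hkey, Real.sqrt_inv, Real.sqrt_sq ht0.le]
  unfold shrinkMap
  rw [habs, hsq]
  refine Prod.ext rfl ?_
  show Complex.exp (-(N:ℂ) * (τ:ℂ) * Complex.I) * (unshrinkMap N (τ, w)).2 / ((t⁻¹ : ℝ) : ℂ) = w
  have htne : ((t:ℝ) : ℂ) ≠ 0 := by exact_mod_cast ne_of_gt ht0
  rw [show (unshrinkMap N (τ, w)).2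
      = Complex.exp ((N:ℂ) * (τ:ℂ) * Complex.I) * w / ((t:ℝ):ℂ) from rfl]
  rw [Complex.ofReal_inv]
  field_simp
  ring_nf
  rw [← Complex.exp_add]
  simp

lemma periodic (N : ℕ) (q : ℝ × ℂ) : shrinkMap N (q.1 + 2 * Real.pi, q.2)
    = ((shrinkMap N q).1 + 2 * Real.pi, (shrinkMap N q).2) := by
  unfold shrinkMap
  refine Prod.ext rfl ?_
  show Complex.exp (-(N:ℂ) * ((q.1 + 2*Real.pi : ℝ) : ℂ) * Complex.I) * q.2 / _
      = Complex.exp (-(N:ℂ) * (q.1:ℂ) * Complex.I) * q.2 / _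
  have : (-(N:ℂ)) * ((q.1 + 2*Real.pi : ℝ) : ℂ) * Complex.I
      = -(N:ℂ) * (q.1:ℂ) * Complex.I + (((-(N:ℤ)) : ℤ) : ℂ) * (2 * (Real.pi:ℂ) * Complex.I) := by
    push_cast
    ring
  rw [this, Complex.exp_add, Complex.exp_int_mul_two_pi_mul_I (-(N:ℤ)), mul_one]

end
/-- For each `N ∈ ℕ`, `(τ, z) ↦ (τ, e^{−Niτ} z / √(1 + (N/2)|z|²))` is a bijection
(commuting with the `2π`-translation in `τ`, hence a diffeomorphism of `S¹ × ℝ²`)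
onto `S¹ × B_{√(2/N)}(0)`, and it preserves the contact structure
`ker(dτ + (1/2)(x dy − y dx))`: the pullback of the contact form is a positive
smooth multiple of it. -/
theorem shrinkMap_contacto (N : ℕ) (hN : 0 < N) :
    Set.BijOn (shrinkMap N) Set.univ
      (Set.univ ×ˢ Metric.ball (0 : ℂ) (Real.sqrt (2 / (N : ℝ)))) ∧
    (∀ q : ℝ × ℂ, shrinkMap N (q.1 + 2 * Real.pi, q.2)
        = ((shrinkMap N q).1 + 2 * Real.pi, (shrinkMap N q).2)) ∧
    ∃ h : ℝ × ℂ → ℝ, ContDiff ℝ (⊤ : ℕ∞) h ∧ (∀ q, 0 < h q) ∧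
      ∀ (q : ℝ × ℂ) (v : ℝ × ℂ),
        alphaCyl (shrinkMap N q) (fderiv ℝ (shrinkMap N) q v) = h q * alphaCyl q v := by
  refine ⟨?_, periodic N, ?_⟩
  · have hinv : Set.InvOn (unshrinkMap N) (shrinkMap N) Set.univ
        (Set.univ ×ˢ Metric.ball (0 : ℂ) (Real.sqrt (2 / (N : ℝ)))) := by
      constructor
      · exact fun q _ => left_inv N q
      · intro p hp
        refine right_inv N hN p ?_
        have := hp.2
        rwa [mem_ball_zero_iff] at this
    refine hinv.bijOn ?_ ?_
    · intro q _
      refine ⟨Set.mem_univ _, ?_⟩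
      rw [mem_ball_zero_iff]
      exact mapsTo_shrink N hN q
    · exact fun p _ => Set.mem_univ _
  · refine ⟨fun q => (1 + ((N:ℝ)/2) * ‖q.2‖ ^ 2)⁻¹, ?_,
      fun q => inv_pos.mpr (oneadd_pos N q.2), fun q v => contact_key N q v⟩
    have heq : (fun q : ℝ × ℂ => (1 + ((N:ℝ)/2) * ‖q.2‖ ^ 2)⁻¹)
        = fun q : ℝ × ℂ => (1 + ((N:ℝ)/2) * (q.2.re * q.2.re + q.2.im * q.2.im))⁻¹ := by
      funext q
      rw [Complex.sq_norm, Complex.normSq_apply]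
    rw [heq]
    have hre : ContDiff ℝ (⊤ : ℕ∞) (fun q : ℝ × ℂ => q.2.re) :=
      Complex.reCLM.contDiff.comp contDiff_snd
    have him : ContDiff ℝ (⊤ : ℕ∞) (fun q : ℝ × ℂ => q.2.im) :=
      Complex.imCLM.contDiff.comp contDiff_snd
    exact (contDiff_const.add (contDiff_const.mul ((hre.mul hre).add (him.mul him)))).inv
      (fun q => ne_of_gt (Fpos N q.2))
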